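/- Let X be uniformly distributed over {0,1}^n and let J be a random variable taking values in {0,1,...,n}. Then H(X[J+1..n] | J) ≤ n − E[J] and H(X[J+1..n] | X[1..J]) ≥ n − E[J] − H(J). -/
import Mathlib


open Finset Real
open scoped Classical

/-- Probability of an event under a weight function on a finite sample space. -/
noncomputable def pr {Ω : Type*} [Fintype Ω] (μ : Ω → ℝ) (E : Ω → Prop) : ℝ :=
  ∑ ω, if E ω then μ ω else 0

/-- Shannon entropy (base 2) of a random variable on a finite probability space. -/
noncomputable def ent {Ω α : Type*} [Fintype Ω] [Fintype α]
    (μ : Ω → ℝ) (X : Ω → α) : ℝ :=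
  -∑ a : α, pr μ (fun ω => X ω = a) * Real.logb 2 (pr μ (fun ω => X ω = a))

/-- Conditional Shannon entropy H(X | Y) (base 2). -/
noncomputable def condEnt {Ω α β : Type*} [Fintype Ω] [Fintype α] [Fintype β]
    (μ : Ω → ℝ) (X : Ω → α) (Y : Ω → β) : ℝ :=
  -∑ a : α, ∑ b : β,
    pr μ (fun ω => X ω = a ∧ Y ω = b) *
      Real.logb 2 (pr μ (fun ω => X ω = a ∧ Y ω = b) / pr μ (fun ω => Y ω = b))

/-- Conditional mutual information I(X : Y | Z) = H(X|Z) - H(X|Y,Z). -/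
noncomputable def condMI {Ω α β γ : Type*} [Fintype Ω] [Fintype α] [Fintype β] [Fintype γ]
    (μ : Ω → ℝ) (X : Ω → α) (Y : Ω → β) (Z : Ω → γ) : ℝ :=
  condEnt μ X Z - condEnt μ X (fun ω => (Y ω, Z ω))

/-- Mutual information I(X : Y) = H(X) - H(X|Y). -/
noncomputable def mutInf {Ω α β : Type*} [Fintype Ω] [Fintype α] [Fintype β]
    (μ : Ω → ℝ) (X : Ω → α) (Y : Ω → β) : ℝ :=
  ent μ X - condEnt μ X Y

/-- Binary entropy function (base 2). -/
noncomputable def H2 (x : ℝ) : ℝ := -x * Real.logb 2 x - (1 - x) * Real.logb 2 (1 - x)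

/-- The prefix X[1..j] of a length-`n` bit string, encoded with `none` outside the prefix. -/
def prefOf {n : ℕ} (x : Fin n → Bool) (j : Fin (n+1)) : Fin n → Option Bool :=
  fun i => if (i : ℕ) < (j : ℕ) then some (x i) else none

/-- The suffix X[j+1..n] of a length-`n` bit string, encoded with `none` inside the prefix. -/
def suffOf {n : ℕ} (x : Fin n → Bool) (j : Fin (n+1)) : Fin n → Option Bool :=
  fun i => if (j : ℕ) ≤ (i : ℕ) then some (x i) else none

section AuxPR
set_option linter.unusedSectionVars false
variable {Ω α β : Type*} [Fintype Ω] [Fintype α] [Fintype β] {μ : Ω → ℝ}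

lemma pr_nonneg (hpos : ∀ ω, 0 ≤ μ ω) (E : Ω → Prop) : 0 ≤ pr μ E :=
  Finset.sum_nonneg fun ω _ => by by_cases h : E ω <;> simp [h, hpos ω]

lemma pr_mono (hpos : ∀ ω, 0 ≤ μ ω) {E F : Ω → Prop} (h : ∀ ω, E ω → F ω) :
    pr μ E ≤ pr μ F := by
  refine Finset.sum_le_sum fun ω _ => ?_
  by_cases hE : E ω
  · simp [hE, h ω hE]
  · by_cases hF : F ω <;> simp [hE, hF, hpos ω]

lemma pr_false {E : Ω → Prop} (h : ∀ ω, ¬ E ω) : pr μ E = 0 :=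
  Finset.sum_eq_zero fun ω _ => by simp [h ω]

lemma pr_exists {E : Ω → Prop} (h : pr μ E ≠ 0) : ∃ ω, E ω := by
  by_contra hc; push_neg at hc; exact h (pr_false hc)

set_option linter.unusedSectionVars false in
lemma sum_pr_fiber (Z : Ω → α) (J : Ω → β) (b : β) :
    ∑ a, pr μ (fun ω => Z ω = a ∧ J ω = b) = pr μ (fun ω => J ω = b) := by
  unfold pr
  rw [Finset.sum_comm]
  refine Finset.sum_congr rfl fun ω _ => ?_
  by_cases h : J ω = b <;> simp [h]

lemma sum_pr_mul (J : Ω → β) (f : β → ℝ) :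
    ∑ b, pr μ (fun ω => J ω = b) * f b = ∑ ω, μ ω * f (J ω) := by
  unfold pr
  simp_rw [Finset.sum_mul]
  rw [Finset.sum_comm]
  exact Finset.sum_congr rfl fun ω _ => by simp [ite_mul]

lemma ent_comp_inj (Z : Ω → α) (f : α → β) (hf : Function.Injective f) :
    ent μ (fun ω => f (Z ω)) = ent μ Z := by
  unfold ent
  congr 1
  rw [← Finset.sum_subset (Finset.subset_univ (Finset.univ.image f))]
  · rw [Finset.sum_image (fun a _ a' _ h => hf h)]
    refine Finset.sum_congr rfl fun a _ => ?_
    have : (fun ω => f (Z ω) = f a) = fun ω => Z ω = a := by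
      funext ω; simp [hf.eq_iff]
    rw [this]
  · intro b _ hb
    have : pr μ (fun ω => f (Z ω) = b) = 0 := by
      refine pr_false fun ω h => hb ?_
      exact Finset.mem_image.2 ⟨Z ω, Finset.mem_univ _, h⟩
    simp [this]

lemma condEnt_nonneg (hpos : ∀ ω, 0 ≤ μ ω) (A : Ω → α) (B : Ω → β) :
    0 ≤ condEnt μ A B := by
  unfold condEnt
  rw [neg_nonneg]
  refine Finset.sum_nonpos fun a _ => Finset.sum_nonpos fun b _ => ?_
  set q := pr μ (fun ω => A ω = a ∧ B ω = b) with hq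
  set p := pr μ (fun ω => B ω = b) with hp
  have hq0 : 0 ≤ q := pr_nonneg hpos _
  have hqp : q ≤ p := pr_mono hpos fun ω h => h.2
  apply mul_nonpos_of_nonneg_of_nonpos hq0
  rcases eq_or_lt_of_le hq0 with h | h
  · simp [← h]
  · have hp0 : 0 < p := lt_of_lt_of_le h hqp
    apply Real.logb_nonpos one_lt_two (by positivity)
    rw [div_le_one hp0]; exact hqp

lemma chain_rule (hpos : ∀ ω, 0 ≤ μ ω) (A : Ω → α) (B : Ω → β) :
    ent μ (fun ω => (A ω, B ω)) = ent μ B + condEnt μ A B := by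
  unfold ent condEnt
  rw [Fintype.sum_prod_type]
  simp_rw [Prod.mk.injEq]
  have key : ∀ a b,
      pr μ (fun ω => A ω = a ∧ B ω = b) * Real.logb 2 (pr μ (fun ω => A ω = a ∧ B ω = b))
      = pr μ (fun ω => A ω = a ∧ B ω = b) *
          Real.logb 2 (pr μ (fun ω => A ω = a ∧ B ω = b) / pr μ (fun ω => B ω = b))
        + pr μ (fun ω => A ω = a ∧ B ω = b) * Real.logb 2 (pr μ (fun ω => B ω = b)) := by
    intro a b
    set q := pr μ (fun ω => A ω = a ∧ B ω = b) with hq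
    set p := pr μ (fun ω => B ω = b) with hp
    by_cases h : q = 0
    · simp [h]
    · have hpne : p ≠ 0 := by
        intro h0
        exact h (le_antisymm (h0 ▸ pr_mono hpos fun ω hh => hh.2) (pr_nonneg hpos _))
      rw [Real.logb_div h hpne]; ring
  simp_rw [key]
  rw [Finset.sum_congr rfl (fun a (_ : a ∈ Finset.univ) => Finset.sum_add_distrib),
    Finset.sum_add_distrib]
  have h2 : ∑ a, ∑ b, pr μ (fun ω => A ω = a ∧ B ω = b) * Real.logb 2 (pr μ (fun ω => B ω = b))
      = ∑ b, pr μ (fun ω => B ω = b) * Real.logb 2 (pr μ (fun ω => B ω = b)) := by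
    rw [Finset.sum_comm]
    refine Finset.sum_congr rfl fun b _ => ?_
    rw [← Finset.sum_mul, sum_pr_fiber]
  rw [h2]; ring

end AuxPR

lemma ent_sum_le {α : Type*} [Fintype α] (p : α → ℝ) (hp : ∀ a, 0 ≤ p a)
    (S : Finset α) (hS : ∀ a, a ∉ S → p a = 0) (m : ℕ) (hcard : S.card ≤ 2 ^ m) :
    -∑ a, p a * Real.logb 2 (p a / ∑ a', p a') ≤ (∑ a', p a') * m := by
  set s := ∑ a', p a' with hs
  have hs0 : 0 ≤ s := Finset.sum_nonneg fun a _ => hp a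
  rcases eq_or_lt_of_le hs0 with h0 | h0
  · have hz : ∀ a, p a = 0 := by
      intro a
      have := (Finset.sum_eq_zero_iff_of_nonneg (fun a _ => hp a)).1 h0.symm
      exact this a (Finset.mem_univ a)
    simp [hz, ← h0]
  · set T := S.filter (fun a => p a ≠ 0) with hT
    have hTz : ∀ a, a ∉ T → p a = 0 := by
      intro a ha
      by_cases haS : a ∈ S
      · by_contra hne; exact ha (Finset.mem_filter.2 ⟨haS, hne⟩)
      · exact hS a haS
    have hsT : ∑ a ∈ T, p a = s := by
      rw [hs]
      exact (Finset.sum_subset (Finset.subset_univ T)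
        (fun a _ ha => hTz a ha)).symm ▸ rfl
    have hL : -∑ a, p a * Real.logb 2 (p a / s) = ∑ a ∈ T, p a * Real.logb 2 (s / p a) := by
      rw [← Finset.sum_subset (Finset.subset_univ T) (fun a _ ha => by simp [hTz a ha])]
      rw [← Finset.sum_neg_distrib]
      refine Finset.sum_congr rfl fun a ha => ?_
      rw [show p a / s = (s / p a)⁻¹ by rw [inv_div], Real.logb_inv]; ring
    rw [hL]
    have hTne : T.Nonempty := by
      by_contra hne
      rw [Finset.not_nonempty_iff_eq_empty] at hne
      have : s = 0 := by rw [← hsT, hne, Finset.sum_empty]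
      exact absurd this (ne_of_gt h0)
    have hlog2 : (0:ℝ) < Real.log 2 := Real.log_pos one_lt_two
    have hpa : ∀ a ∈ T, 0 < p a := fun a ha =>
      lt_of_le_of_ne (hp a) (Ne.symm (Finset.mem_filter.1 ha).2)
    have jensen : ∑ a ∈ T, (p a / s) * Real.log (s / p a) ≤ Real.log T.card := by
      have := (strictConcaveOn_log_Ioi.concaveOn).le_map_sum
        (t := T) (w := fun a => p a / s) (p := fun a => s / p a)
        (fun a _ => div_nonneg (hp a) hs0)
        (by rw [← Finset.sum_div, hsT, div_self (ne_of_gt h0)])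
        (fun a ha => Set.mem_Ioi.2 (by have := hpa a ha; positivity))
      simp only [smul_eq_mul] at this
      refine this.trans_eq ?_
      congr 1
      rw [Finset.sum_congr rfl (fun a ha => ?_), Finset.sum_const, nsmul_eq_mul, mul_one]
      have h1 := hpa a ha
      field_simp
    have hlogcard : Real.log T.card ≤ m * Real.log 2 := by
      have h1 : (T.card : ℝ) ≤ (2:ℝ) ^ m := by
        calc (T.card : ℝ) ≤ (S.card : ℝ) := by
              exact_mod_cast Finset.card_le_card (Finset.filter_subset _ _)
          _ ≤ (2:ℝ) ^ m := by exact_mod_cast hcard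
      calc Real.log T.card ≤ Real.log ((2:ℝ) ^ m) := by
            apply Real.log_le_log (by exact_mod_cast Finset.card_pos.2 hTne) h1
        _ = m * Real.log 2 := by rw [Real.log_pow]
    have hmain : ∑ a ∈ T, p a * Real.log (s / p a) ≤ s * (m * Real.log 2) := by
      have : ∑ a ∈ T, p a * Real.log (s / p a)
          = s * ∑ a ∈ T, (p a / s) * Real.log (s / p a) := by
        rw [Finset.mul_sum]
        refine Finset.sum_congr rfl fun a ha => ?_
        field_simp
      rw [this]
      exact mul_le_mul_of_nonneg_left (jensen.trans hlogcard) hs0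
    have : ∑ a ∈ T, p a * Real.logb 2 (s / p a)
        = (∑ a ∈ T, p a * Real.log (s / p a)) / Real.log 2 := by
      rw [Finset.sum_div]
      refine Finset.sum_congr rfl fun a ha => ?_
      rw [Real.logb, mul_div_assoc]
    rw [this]
    rw [div_le_iff₀ hlog2]
    calc ∑ a ∈ T, p a * Real.log (s / p a) ≤ s * (m * Real.log 2) := hmain
      _ = s * m * Real.log 2 := by ring

lemma condEnt_le {Ω α β : Type*} [Fintype Ω] [Fintype α] [Fintype β] {μ : Ω → ℝ}
    (hpos : ∀ ω, 0 ≤ μ ω) (Z : Ω → α) (J : Ω → β) (k : β → ℕ)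
    (hk : ∀ b, (Finset.univ.filter fun a =>
      pr μ (fun ω => Z ω = a ∧ J ω = b) ≠ 0).card ≤ 2 ^ (k b)) :
    condEnt μ Z J ≤ ∑ b, pr μ (fun ω => J ω = b) * (k b : ℝ) := by
  have hre : condEnt μ Z J = ∑ b, -∑ a,
      pr μ (fun ω => Z ω = a ∧ J ω = b) *
        Real.logb 2 (pr μ (fun ω => Z ω = a ∧ J ω = b) / pr μ (fun ω => J ω = b)) := by
    unfold condEnt
    rw [Finset.sum_comm, ← Finset.sum_neg_distrib]
  rw [hre]
  refine Finset.sum_le_sum fun b _ => ?_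
  have hfib := sum_pr_fiber (μ := μ) Z J b
  rw [← hfib]
  exact ent_sum_le _ (fun a => pr_nonneg hpos _) _ (fun a ha => by simpa using ha) (k b) (hk b)

section Comb
variable {n : ℕ}

lemma suffOf_j_eq {x x' : Fin n → Bool} {j j' : Fin (n+1)}
    (h : suffOf x j = suffOf x' j') : j = j' := by
  have hiff : ∀ i : Fin n, ((j:ℕ) ≤ (i:ℕ) ↔ (j':ℕ) ≤ (i:ℕ)) := by
    intro i
    have hi2 := congrFun h i
    simp only [suffOf] at hi2
    constructor <;> intro hle <;> by_contra hnot <;> simp [hle, hnot] at hi2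
  apply Fin.ext
  have h1 : (j:ℕ) ≤ (j':ℕ) := by
    by_contra hn
    push_neg at hn
    have hj'n : (j':ℕ) < n := lt_of_lt_of_le hn (Nat.lt_succ_iff.mp j.isLt)
    have := (hiff ⟨(j':ℕ), hj'n⟩).2 (le_refl _)
    simp at this; omega
  have h2 : (j':ℕ) ≤ (j:ℕ) := by
    by_contra hn
    push_neg at hn
    have hjn : (j:ℕ) < n := lt_of_lt_of_le hn (Nat.lt_succ_iff.mp j'.isLt)
    have := (hiff ⟨(j:ℕ), hjn⟩).1 (le_refl _)
    simp at this; omega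
  omega

lemma prefOf_j_eq {x x' : Fin n → Bool} {j j' : Fin (n+1)}
    (h : prefOf x j = prefOf x' j') : j = j' := by
  have hiff : ∀ i : Fin n, ((i:ℕ) < (j:ℕ) ↔ (i:ℕ) < (j':ℕ)) := by
    intro i
    have hi2 := congrFun h i
    simp only [prefOf] at hi2
    constructor <;> intro hle <;> by_contra hnot <;> simp [hle, hnot] at hi2
  apply Fin.ext
  have h1 : (j:ℕ) ≤ (j':ℕ) := by
    by_contra hn
    push_neg at hn
    have hj'n : (j':ℕ) < n := lt_of_lt_of_le hn (Nat.lt_succ_iff.mp j.isLt)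
    have := (hiff ⟨(j':ℕ), hj'n⟩).1 (by simpa using hn)
    simp at this
  have h2 : (j':ℕ) ≤ (j:ℕ) := by
    by_contra hn
    push_neg at hn
    have hjn : (j:ℕ) < n := lt_of_lt_of_le hn (Nat.lt_succ_iff.mp j'.isLt)
    have := (hiff ⟨(j:ℕ), hjn⟩).2 (by simpa using hn)
    simp at this
  omega

lemma suff_pref_inj :
    Function.Injective (fun p : (Fin n → Bool) × Fin (n+1) =>
      (suffOf p.1 p.2, prefOf p.1 p.2)) := by
  rintro ⟨x, j⟩ ⟨x', j'⟩ h
  simp only [Prod.mk.injEq] at h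
  obtain ⟨hs, hp⟩ := h
  have hj : j = j' := suffOf_j_eq hs
  subst hj
  have hx : x = x' := by
    funext i
    by_cases hi : (j:ℕ) ≤ (i:ℕ)
    · have := congrFun hs i; simpa [suffOf, hi] using this
    · push_neg at hi
      have := congrFun hp i; simpa [prefOf, hi] using this
  rw [hx]

lemma exists_recover : ∃ g : (Fin n → Option Bool) → Fin (n+1),
    ∀ (x : Fin n → Bool) (j : Fin (n+1)), g (prefOf x j) = j := by
  refine ⟨fun p => if h : ∃ j : Fin (n+1), ∃ x : Fin n → Bool, prefOf x j = p
    then h.choose else 0, ?_⟩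
  intro x j
  have h : ∃ j' : Fin (n+1), ∃ x' : Fin n → Bool, prefOf x' j' = prefOf x j := ⟨j, x, rfl⟩
  beta_reduce
  rw [dif_pos h]
  obtain ⟨x', hx'⟩ := h.choose_spec
  exact prefOf_j_eq hx'

lemma card_fin_lt (b : ℕ) (hb : b ≤ n) :
    (Finset.univ.filter fun i : Fin n => (i:ℕ) < b).card = b := by
  have key : (Finset.univ.filter fun i : Fin n => (i:ℕ) < b).card
      = (Finset.range b).card := by
    refine Finset.card_bij (fun i _ => (i:ℕ)) ?_ ?_ ?_
    · intro i hi; simp at hi ⊢; exact hi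
    · intro i hi i' hi' hh; exact Fin.ext hh
    · intro k hk
      simp at hk
      exact ⟨⟨k, lt_of_lt_of_le hk hb⟩, by simp [hk], rfl⟩
  rw [key, Finset.card_range]

lemma card_fin_le (b : ℕ) (hb : b ≤ n) :
    (Finset.univ.filter fun i : Fin n => b ≤ (i:ℕ)).card = n - b := by
  have h2 : (Finset.univ.filter fun i : Fin n => b ≤ (i:ℕ))
      = (Finset.univ.filter fun i : Fin n => (i:ℕ) < b)ᶜ := by
    ext i; simp [not_lt]
  rw [h2, Finset.card_compl, card_fin_lt b hb, Fintype.card_fin]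

lemma card_subtype_le (b : ℕ) (hb : b ≤ n) :
    Fintype.card ({i : Fin n // b ≤ (i:ℕ)} → Bool) = 2 ^ (n - b) := by
  rw [Fintype.card_fun, Fintype.card_subtype, card_fin_le b hb, Fintype.card_bool]

lemma card_subtype_lt (b : ℕ) (hb : b ≤ n) :
    Fintype.card ({i : Fin n // (i:ℕ) < b} → Bool) = 2 ^ b := by
  rw [Fintype.card_fun, Fintype.card_subtype, card_fin_lt b hb, Fintype.card_bool]

lemma suff_support_card {Ω : Type*} [Fintype Ω] (μ : Ω → ℝ) (X : Ω → Fin n → Bool)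
    (J : Ω → Fin (n+1)) (b : Fin (n+1)) :
    (Finset.univ.filter fun a : Fin n → Option Bool =>
      pr μ (fun ω => suffOf (X ω) (J ω) = a ∧ J ω = b) ≠ 0).card ≤ 2 ^ (n - (b:ℕ)) := by
  have hb : (b:ℕ) ≤ n := Nat.lt_succ_iff.mp b.isLt
  calc (Finset.univ.filter fun a : Fin n → Option Bool =>
      pr μ (fun ω => suffOf (X ω) (J ω) = a ∧ J ω = b) ≠ 0).card
      ≤ (Finset.univ : Finset ({i : Fin n // (b:ℕ) ≤ (i:ℕ)} → Bool)).card := by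
        refine Finset.card_le_card_of_injOn
          (fun a => fun i => (a i.1).getD true)
          (fun a _ => Finset.mem_univ _) ?_
        intro a ha a' ha' hEq
        simp only [Finset.coe_filter, Set.mem_setOf_eq, Finset.mem_univ, true_and] at ha ha'
        obtain ⟨ω, h1, h2⟩ := pr_exists ha
        obtain ⟨ω', h1', h2'⟩ := pr_exists ha'
        have ea : a = suffOf (X ω) b := by rw [← h1, h2]
        have ea' : a' = suffOf (X ω') b := by rw [← h1', h2']
        funext i
        by_cases hi : (b:ℕ) ≤ (i:ℕ)
        · have hEqi := congrFun hEq ⟨i, hi⟩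
          rw [ea, ea'] at hEqi ⊢
          simp only [suffOf, hi, if_true, Option.getD_some] at hEqi ⊢
          rw [hEqi]
        · rw [ea, ea']; simp [suffOf, hi]
    _ = 2 ^ (n - (b:ℕ)) := by rw [Finset.card_univ, card_subtype_le _ hb]

lemma pref_support_card {Ω : Type*} [Fintype Ω] (μ : Ω → ℝ) (X : Ω → Fin n → Bool)
    (J : Ω → Fin (n+1)) (b : Fin (n+1)) :
    (Finset.univ.filter fun a : Fin n → Option Bool =>
      pr μ (fun ω => prefOf (X ω) (J ω) = a ∧ J ω = b) ≠ 0).card ≤ 2 ^ (b:ℕ) := by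
  have hb : (b:ℕ) ≤ n := Nat.lt_succ_iff.mp b.isLt
  calc (Finset.univ.filter fun a : Fin n → Option Bool =>
      pr μ (fun ω => prefOf (X ω) (J ω) = a ∧ J ω = b) ≠ 0).card
      ≤ (Finset.univ : Finset ({i : Fin n // (i:ℕ) < (b:ℕ)} → Bool)).card := by
        refine Finset.card_le_card_of_injOn
          (fun a => fun i => (a i.1).getD true)
          (fun a _ => Finset.mem_univ _) ?_
        intro a ha a' ha' hEq
        simp only [Finset.coe_filter, Set.mem_setOf_eq, Finset.mem_univ, true_and] at ha ha'
        obtain ⟨ω, h1, h2⟩ := pr_exists ha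
        obtain ⟨ω', h1', h2'⟩ := pr_exists ha'
        have ea : a = prefOf (X ω) b := by rw [← h1, h2]
        have ea' : a' = prefOf (X ω') b := by rw [← h1', h2']
        funext i
        by_cases hi : (i:ℕ) < (b:ℕ)
        · have hEqi := congrFun hEq ⟨i, hi⟩
          rw [ea, ea'] at hEqi ⊢
          simp only [prefOf, hi, if_true, Option.getD_some] at hEqi ⊢
          rw [hEqi]
        · rw [ea, ea']; simp [prefOf, hi]
    _ = 2 ^ (b:ℕ) := by rw [Finset.card_univ, card_subtype_lt _ hb]

lemma ent_unif {Ω : Type*} [Fintype Ω] {μ : Ω → ℝ} (X : Ω → Fin n → Bool)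
    (hX : ∀ x : Fin n → Bool, pr μ (fun ω => X ω = x) = 1 / 2 ^ n) :
    ent μ X = n := by
  unfold ent
  simp_rw [hX]
  rw [Finset.sum_const, Finset.card_univ]
  have hcard : Fintype.card (Fin n → Bool) = 2 ^ n := by simp
  rw [hcard, nsmul_eq_mul]
  have hlog : Real.logb 2 ((1:ℝ) / 2 ^ n) = -(n:ℝ) := by
    rw [one_div, Real.logb_inv, Real.logb_pow, Real.logb_self_eq_one one_lt_two]
    ring
  rw [hlog]
  have h2n : ((2:ℝ))^n ≠ 0 := by positivity
  push_cast
  field_simp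

end Comb

set_option maxHeartbeats 1000000 in
theorem stmt2 {Ω : Type*} [Fintype Ω] (n : ℕ) (μ : Ω → ℝ)
    (hpos : ∀ ω, 0 ≤ μ ω) (hsum : ∑ ω, μ ω = 1)
    (X : Ω → Fin n → Bool) (J : Ω → Fin (n+1))
    (hX : ∀ x : Fin n → Bool, pr μ (fun ω => X ω = x) = 1 / 2 ^ n) :
    condEnt μ (fun ω => suffOf (X ω) (J ω)) J ≤ (n : ℝ) - ∑ ω, μ ω * ((J ω : ℕ) : ℝ) ∧
    condEnt μ (fun ω => suffOf (X ω) (J ω)) (fun ω => prefOf (X ω) (J ω))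
      ≥ (n : ℝ) - (∑ ω, μ ω * ((J ω : ℕ) : ℝ)) - ent μ J := by
  have hble : ∀ b : Fin (n+1), (b:ℕ) ≤ n := fun b => Nat.lt_succ_iff.mp b.isLt
  -- Part 1
  have part1 : condEnt μ (fun ω => suffOf (X ω) (J ω)) J
      ≤ (n : ℝ) - ∑ ω, μ ω * ((J ω : ℕ) : ℝ) := by
    have h1 := condEnt_le hpos (fun ω => suffOf (X ω) (J ω)) J (fun b => n - (b:ℕ))
      (fun b => suff_support_card μ X J b)
    refine h1.trans ?_
    rw [sum_pr_mul]
    have heq : ∀ ω : Ω, μ ω * ((n - (J ω : ℕ) : ℕ) : ℝ)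
        = μ ω * (n:ℝ) - μ ω * ((J ω : ℕ):ℝ) := by
      intro ω
      rw [Nat.cast_sub (hble (J ω))]
      ring
    have h2 : ∑ ω, μ ω * ((n - (J ω : ℕ) : ℕ) : ℝ)
        = (n:ℝ) - ∑ ω, μ ω * ((J ω : ℕ):ℝ) := by
      rw [Finset.sum_congr rfl fun ω _ => heq ω, Finset.sum_sub_distrib,
        ← Finset.sum_mul, hsum, one_mul]
    rw [h2]
  refine ⟨part1, ?_⟩
  -- Part 2
  have hent_pair : ent μ (fun ω => (suffOf (X ω) (J ω), prefOf (X ω) (J ω)))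
      = ent μ (fun ω => (X ω, J ω)) :=
    ent_comp_inj (fun ω => (X ω, J ω)) _ suff_pref_inj
  have hchain1 : ent μ (fun ω => (suffOf (X ω) (J ω), prefOf (X ω) (J ω)))
      = ent μ (fun ω => prefOf (X ω) (J ω))
        + condEnt μ (fun ω => suffOf (X ω) (J ω)) (fun ω => prefOf (X ω) (J ω)) :=
    chain_rule hpos _ _
  have hXJ_ge : (n:ℝ) ≤ ent μ (fun ω => (X ω, J ω)) := by
    have hswap : ent μ (fun ω => (X ω, J ω)) = ent μ (fun ω => (J ω, X ω)) :=
      ent_comp_inj (fun ω => (J ω, X ω)) Prod.swap Prod.swap_injective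
    rw [hswap, chain_rule hpos J X, ent_unif X hX]
    have := condEnt_nonneg (μ := μ) hpos J X
    linarith
  have hprefJ : ent μ (fun ω => prefOf (X ω) (J ω))
      = ent μ J + condEnt μ (fun ω => prefOf (X ω) (J ω)) J := by
    have hpair : ent μ (fun ω => (prefOf (X ω) (J ω), J ω))
        = ent μ (fun ω => prefOf (X ω) (J ω)) := by
      obtain ⟨g, hg⟩ := exists_recover (n := n)
      have heq : (fun ω => (prefOf (X ω) (J ω), J ω))
          = fun ω => ((fun p => (p, g p)) (prefOf (X ω) (J ω))) := by
        funext ω; simp [hg]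
      rw [heq]
      exact ent_comp_inj (fun ω => prefOf (X ω) (J ω)) (fun p => (p, g p))
        (fun p p' h => congrArg Prod.fst h)
    rw [← hpair, chain_rule hpos _ J]
  have hcond_pref : condEnt μ (fun ω => prefOf (X ω) (J ω)) J
      ≤ ∑ ω, μ ω * ((J ω : ℕ):ℝ) := by
    have h1 := condEnt_le hpos (fun ω => prefOf (X ω) (J ω)) J (fun b => (b:ℕ))
      (fun b => pref_support_card μ X J b)
    refine h1.trans ?_
    rw [sum_pr_mul]
  linarith [hent_pair, hchain1, hXJ_ge, hprefJ, hcond_pref]
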